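/- Let M be a compact Hausdorff space with basepoint x₀, fix 0 < ε < 1/6, and let σ : [0,ε] → M be a stick. Let H : [0,ε] × M → M be a continuous map such that H(0,·) = id_M and H(t,·) : M → M is a homeomorphism for every t ∈ [0,ε], and define σ̃ : [0,ε] → M by σ̃(t) := H(t,σ(t)). Then the map Φ : Ω^σM → Ω^σ̃M defined by Φ(γ)(t) = H(t,γ(t)) for t ∈ [0,ε], Φ(γ)(t) = H(ε,γ(t)) for t ∈ [ε,1−ε], and Φ(γ)(t) = H(1−t,γ(t)) for t ∈ [1−ε,1] is a well-defined homeomorphism; moreover, setting x₁ := H(ε,x₀), for every γ ∈ Ω^σM and every t ∈ [ε,1−ε] one has γ(t) = x₀ if and only if Φ(γ)(t) = x₁. -/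
import Mathlib


open Set

/-- The based loop space of `M` at `x₀`: continuous maps `[0,1] → M` sending both
endpoints to `x₀`, with the compact-open topology. -/
abbrev OmegaLoop (M : Type*) [TopologicalSpace M] (x₀ : M) : Type _ :=
  {γ : C(unitInterval, M) // γ 0 = x₀ ∧ γ 1 = x₀}

/-- The subspace `Ω^σ' M` of loops following `σ'` on `[0,ε]` and its reverse on
`[1-ε,1]`. -/
abbrev StickOmegaLoop (M : Type*) [TopologicalSpace M] (x₀ : M) (ε : ℝ) (σ' : ℝ → M) :
    Type _ :=
  {γ : OmegaLoop M x₀ // ∀ t : unitInterval,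
    ((t : ℝ) ≤ ε → γ.1 t = σ' t) ∧ (1 - ε ≤ (t : ℝ) → γ.1 t = σ' (1 - (t : ℝ)))}

/-- Let `M` be compact Hausdorff with basepoint `x₀`, `0 < ε < 1/6`, `σ`
a stick.  Let `H : [0,ε] × M → M` be continuous with `H(0,·) = id` and each `H(t,·)` a
homeomorphism, and set `σ̃(t) := H(t,σ(t))`.  The map `Φ : Ω^σM → Ω^σ̃M` defined by the
explicit piecewise formulas is a well-defined homeomorphism; moreover, with
`x₁ := H(ε,x₀)`, for every `γ ∈ Ω^σM` and `t ∈ [ε,1-ε]` one has `γ(t) = x₀` iff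
`Φ(γ)(t) = x₁`. -/
theorem stick_translation_homeomorph
    {M : Type*} [TopologicalSpace M] [CompactSpace M] [T2Space M]
    (x₀ : M) (ε : ℝ) (hε0 : 0 < ε) (hε : ε < 1/6)
    (σ : ℝ → M) (hσcont : ContinuousOn σ (Icc 0 ε)) (hσinj : InjOn σ (Icc 0 ε))
    (hσ0 : σ 0 = x₀)
    (H : ℝ → M → M)
    (hHcont : ContinuousOn (fun p : ℝ × M => H p.1 p.2) (Icc 0 ε ×ˢ univ))
    (hH0 : ∀ x : M, H 0 x = x)
    (hHh : ∀ t ∈ Icc (0 : ℝ) ε, IsHomeomorph (H t)) :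
    ∃ Φ : StickOmegaLoop M x₀ ε σ ≃ₜ StickOmegaLoop M x₀ ε (fun t => H t (σ t)),
      (∀ (γ : StickOmegaLoop M x₀ ε σ) (t : unitInterval),
        ((t : ℝ) ≤ ε → (Φ γ).1.1 t = H t (γ.1.1 t)) ∧
        (ε ≤ (t : ℝ) → (t : ℝ) ≤ 1 - ε → (Φ γ).1.1 t = H ε (γ.1.1 t)) ∧
        (1 - ε ≤ (t : ℝ) → (Φ γ).1.1 t = H (1 - (t : ℝ)) (γ.1.1 t))) ∧
      (∀ (γ : StickOmegaLoop M x₀ ε σ) (t : unitInterval),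
        ε ≤ (t : ℝ) → (t : ℝ) ≤ 1 - ε →
        (γ.1.1 t = x₀ ↔ (Φ γ).1.1 t = H ε x₀)) := by
  classical
  have _inst : Nonempty M := ⟨x₀⟩
  -- the time reparametrization
  set f : ℝ → ℝ := fun t => min (min t ε) (1 - t) with hf_def
  have hfcont : Continuous f := by
    apply Continuous.min
    · exact continuous_id.min continuous_const
    · exact continuous_const.sub continuous_id
  have hf_mem : ∀ t : unitInterval, f (t : ℝ) ∈ Icc (0 : ℝ) ε := by
    intro t
    refine ⟨le_min (le_min t.2.1 hε0.le) (by linarith [t.2.2]), ?_⟩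
    exact (min_le_left _ _).trans (min_le_right _ _)
  have hf_le : ∀ t : unitInterval, (t : ℝ) ≤ ε → f (t : ℝ) = (t : ℝ) := by
    intro t ht
    simp only [hf_def]
    rw [min_eq_left ht, min_eq_left (by linarith)]
  have hf_mid : ∀ t : unitInterval, ε ≤ (t : ℝ) → (t : ℝ) ≤ 1 - ε → f (t : ℝ) = ε := by
    intro t ht1 ht2
    simp only [hf_def]
    rw [min_eq_right ht1, min_eq_left (by linarith)]
  have hf_hi : ∀ t : unitInterval, 1 - ε ≤ (t : ℝ) → f (t : ℝ) = 1 - (t : ℝ) := by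
    intro t ht
    simp only [hf_def]
    rw [min_eq_right (le_min (by linarith) (by linarith))]
  have hc0 : ((0 : unitInterval) : ℝ) = 0 := rfl
  have hc1 : ((1 : unitInterval) : ℝ) = 1 := rfl
  have hf0 : f ((0 : unitInterval) : ℝ) = 0 := by rw [hf_le 0 (by rw [hc0]; exact hε0.le), hc0]
  have hf1 : f ((1 : unitInterval) : ℝ) = 0 := by rw [hf_hi 1 (by rw [hc1]; linarith), hc1]; ring
  -- joint continuity of H on the subtype
  have hKc : Continuous (fun p : Icc (0 : ℝ) ε × M => H p.1.1 p.2) := by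
    have : Continuous fun p : Icc (0 : ℝ) ε × M => ((p.1.1, p.2) : ℝ × M) :=
      (continuous_subtype_val.comp continuous_fst).prodMk continuous_snd
    exact hHcont.comp_continuous this (fun p => ⟨p.1.2, mem_univ _⟩)
  have hbij : ∀ t ∈ Icc (0 : ℝ) ε, Function.Bijective (H t) := fun t ht => (hHh t ht).bijective
  -- the fiberwise inverse
  set Hinv : ℝ → M → M := fun t x => Function.invFun (H t) x with hHinv_def
  have hHinv_left : ∀ t ∈ Icc (0 : ℝ) ε, ∀ x : M, Hinv t (H t x) = x := by
    intro t ht x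
    exact Function.leftInverse_invFun (hbij t ht).1 x
  have hHinv_right : ∀ t ∈ Icc (0 : ℝ) ε, ∀ x : M, H t (Hinv t x) = x := by
    intro t ht x
    exact Function.rightInverse_invFun (hbij t ht).2 x
  -- continuity of the fiberwise inverse via compactness
  have hinvc : Continuous (fun p : Icc (0 : ℝ) ε × M => Hinv p.1.1 p.2) := by
    let E : (Icc (0 : ℝ) ε × M) ≃ (Icc (0 : ℝ) ε × M) :=
      { toFun := fun p => (p.1, H p.1.1 p.2)
        invFun := fun p => (p.1, Hinv p.1.1 p.2)
        left_inv := fun p => by simp [hHinv_left p.1.1 p.1.2 p.2]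
        right_inv := fun p => by simp [hHinv_right p.1.1 p.1.2 p.2] }
    have hEc : Continuous (E : (Icc (0 : ℝ) ε × M) → (Icc (0 : ℝ) ε × M)) :=
      continuous_fst.prodMk hKc
    let Ehom := hEc.homeoOfEquivCompactToT2
    have : (fun p : Icc (0 : ℝ) ε × M => Hinv p.1.1 p.2) =
        fun p => (Ehom.symm p).2 := rfl
    rw [this]
    exact continuous_snd.comp Ehom.symm.continuous
  -- the forward map on continuous maps
  let Φ₀ : C(unitInterval, M) → C(unitInterval, M) := fun γ =>
    ⟨fun t => H (f (t : ℝ)) (γ t), by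
      have : Continuous fun t : unitInterval =>
          ((⟨f (t : ℝ), hf_mem t⟩ : Icc (0 : ℝ) ε), γ t) :=
        ((hfcont.comp continuous_subtype_val).subtype_mk _).prodMk γ.continuous
      exact hKc.comp this⟩
  let Ψ₀ : C(unitInterval, M) → C(unitInterval, M) := fun γ =>
    ⟨fun t => Hinv (f (t : ℝ)) (γ t), by
      have : Continuous fun t : unitInterval =>
          ((⟨f (t : ℝ), hf_mem t⟩ : Icc (0 : ℝ) ε), γ t) :=
        ((hfcont.comp continuous_subtype_val).subtype_mk _).prodMk γ.continuous
      exact hinvc.comp this⟩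
  have hΦ₀app : ∀ (γ : C(unitInterval, M)) (t : unitInterval),
      Φ₀ γ t = H (f (t : ℝ)) (γ t) := fun _ _ => rfl
  have hΨ₀app : ∀ (γ : C(unitInterval, M)) (t : unitInterval),
      Ψ₀ γ t = Hinv (f (t : ℝ)) (γ t) := fun _ _ => rfl
  have hΦ₀c : Continuous Φ₀ := by
    apply ContinuousMap.continuous_of_continuous_uncurry
    have : Continuous fun p : C(unitInterval, M) × unitInterval =>
        ((⟨f (p.2 : ℝ), hf_mem p.2⟩ : Icc (0 : ℝ) ε), p.1 p.2) :=
      ((hfcont.comp (continuous_subtype_val.comp continuous_snd)).subtype_mk _).prodMk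
        continuous_eval
    exact hKc.comp this
  have hΨ₀c : Continuous Ψ₀ := by
    apply ContinuousMap.continuous_of_continuous_uncurry
    have : Continuous fun p : C(unitInterval, M) × unitInterval =>
        ((⟨f (p.2 : ℝ), hf_mem p.2⟩ : Icc (0 : ℝ) ε), p.1 p.2) :=
      ((hfcont.comp (continuous_subtype_val.comp continuous_snd)).subtype_mk _).prodMk
        continuous_eval
    exact hinvc.comp this
  -- well-definedness of the forward map
  set σ' : ℝ → M := fun t => H t (σ t) with hσ'_def
  have hfwd : ∀ γ : StickOmegaLoop M x₀ ε σ,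
      (Φ₀ γ.1.1 0 = x₀ ∧ Φ₀ γ.1.1 1 = x₀) ∧
      (∀ t : unitInterval, ((t : ℝ) ≤ ε → Φ₀ γ.1.1 t = σ' (t : ℝ)) ∧
        (1 - ε ≤ (t : ℝ) → Φ₀ γ.1.1 t = σ' (1 - (t : ℝ)))) := by
    intro γ
    refine ⟨⟨?_, ?_⟩, ?_⟩
    · rw [hΦ₀app, hf0, γ.1.2.1, hH0]
    · rw [hΦ₀app, hf1, γ.1.2.2, hH0]
    · intro t
      constructor
      · intro ht
        rw [hΦ₀app, hf_le t ht, (γ.2 t).1 ht]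
      · intro ht
        rw [hΦ₀app, hf_hi t ht, (γ.2 t).2 ht]
  have hbwd : ∀ γ : StickOmegaLoop M x₀ ε σ',
      (Ψ₀ γ.1.1 0 = x₀ ∧ Ψ₀ γ.1.1 1 = x₀) ∧
      (∀ t : unitInterval, ((t : ℝ) ≤ ε → Ψ₀ γ.1.1 t = σ (t : ℝ)) ∧
        (1 - ε ≤ (t : ℝ) → Ψ₀ γ.1.1 t = σ (1 - (t : ℝ)))) := by
    intro γ
    have h0mem : (0 : ℝ) ∈ Icc (0 : ℝ) ε := ⟨le_refl 0, hε0.le⟩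
    refine ⟨⟨?_, ?_⟩, ?_⟩
    · rw [hΨ₀app, hf0, γ.1.2.1]
      calc Hinv 0 x₀ = Hinv 0 (H 0 x₀) := by rw [hH0]
        _ = x₀ := hHinv_left 0 h0mem x₀
    · rw [hΨ₀app, hf1, γ.1.2.2]
      calc Hinv 0 x₀ = Hinv 0 (H 0 x₀) := by rw [hH0]
        _ = x₀ := hHinv_left 0 h0mem x₀
    · intro t
      constructor
      · intro ht
        rw [hΨ₀app, hf_le t ht, (γ.2 t).1 ht]
        exact hHinv_left (t : ℝ) ⟨t.2.1, ht⟩ _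
      · intro ht
        rw [hΨ₀app, hf_hi t ht, (γ.2 t).2 ht]
        exact hHinv_left (1 - (t : ℝ)) ⟨by linarith [t.2.2], by linarith [t.2.1]⟩ _
  -- the homeomorphism
  let Φ : StickOmegaLoop M x₀ ε σ ≃ₜ StickOmegaLoop M x₀ ε σ' :=
    { toFun := fun γ => ⟨⟨Φ₀ γ.1.1, (hfwd γ).1⟩, (hfwd γ).2⟩
      invFun := fun γ => ⟨⟨Ψ₀ γ.1.1, (hbwd γ).1⟩, (hbwd γ).2⟩
      left_inv := by
        intro γ
        apply Subtype.ext
        apply Subtype.ext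
        ext t
        show Hinv (f (t : ℝ)) (H (f (t : ℝ)) (γ.1.1 t)) = γ.1.1 t
        exact hHinv_left _ (hf_mem t) _
      right_inv := by
        intro γ
        apply Subtype.ext
        apply Subtype.ext
        ext t
        show H (f (t : ℝ)) (Hinv (f (t : ℝ)) (γ.1.1 t)) = γ.1.1 t
        exact hHinv_right _ (hf_mem t) _
      continuous_toFun := by
        apply Continuous.subtype_mk
        apply Continuous.subtype_mk
        exact hΦ₀c.comp (continuous_subtype_val.comp continuous_subtype_val)
      continuous_invFun := by
        apply Continuous.subtype_mk
        apply Continuous.subtype_mk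
        exact hΨ₀c.comp (continuous_subtype_val.comp continuous_subtype_val) }
  refine ⟨Φ, ?_, ?_⟩
  · intro γ t
    refine ⟨?_, ?_, ?_⟩
    · intro ht
      show H (f (t : ℝ)) (γ.1.1 t) = H (t : ℝ) (γ.1.1 t)
      rw [hf_le t ht]
    · intro ht1 ht2
      show H (f (t : ℝ)) (γ.1.1 t) = H ε (γ.1.1 t)
      rw [hf_mid t ht1 ht2]
    · intro ht
      show H (f (t : ℝ)) (γ.1.1 t) = H (1 - (t : ℝ)) (γ.1.1 t)
      rw [hf_hi t ht]
  · intro γ t ht1 ht2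
    have hΦt : (Φ γ).1.1 t = H ε (γ.1.1 t) := by
      show H (f (t : ℝ)) (γ.1.1 t) = H ε (γ.1.1 t)
      rw [hf_mid t ht1 ht2]
    rw [hΦt]
    constructor
    · intro h; rw [h]
    · intro h
      exact (hbij ε ⟨hε0.le, le_refl ε⟩).1 h
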